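/- Let A and B be n×n complex positive definite matrices. With A♯B := A^{1/2}(A^{-1/2}BA^{-1/2})^{1/2}A^{1/2} and A♮B := A^{1/2}(B^{1/2}A^{-1}B^{1/2})^{1/2}A^{1/2}, the spectral norm satisfies ‖A^{1/2}B^{1/2}‖² ≤ ‖A♯B‖ · ‖A♮B‖. -/

import Mathlib

open scoped ComplexOrder Matrix Classical

/-- The positive semidefinite square root of a positive semidefinite matrix
(junk value `0` if the matrix is not positive semidefinite). -/
noncomputable def sqrtm {n : ℕ} (A : Matrix (Fin n) (Fin n) ℂ) : Matrix (Fin n) (Fin n) ℂ :=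
  if h : A.PosSemidef then
    (h.1.eigenvectorUnitary : Matrix (Fin n) (Fin n) ℂ) *
      Matrix.diagonal ((↑) ∘ (√·) ∘ h.1.eigenvalues) *
      (star h.1.eigenvectorUnitary : Matrix (Fin n) (Fin n) ℂ)
  else 0

/-- The absolute value `|X| = (Xᴴ X)^{1/2}` of a matrix. -/
noncomputable def absm {n : ℕ} (X : Matrix (Fin n) (Fin n) ℂ) : Matrix (Fin n) (Fin n) ℂ :=
  sqrtm (Xᴴ * X)

/-- The spectral norm of a (rectangular) complex matrix: the operator norm of the
induced linear map between Euclidean spaces, i.e. the largest singular value. -/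
noncomputable def specNorm {m n : ℕ} (X : Matrix (Fin m) (Fin n) ℂ) : ℝ :=
  ‖LinearMap.toContinuousLinearMap (Matrix.toEuclideanLin X)‖


/-- The geometric mean `A ♯ B := A^{1/2} (A^{-1/2} B A^{-1/2})^{1/2} A^{1/2}` of positive
definite matrices. -/
noncomputable def geomMean {n : ℕ} (A B : Matrix (Fin n) (Fin n) ℂ) :
    Matrix (Fin n) (Fin n) ℂ :=
  sqrtm A * sqrtm ((sqrtm A)⁻¹ * B * (sqrtm A)⁻¹) * sqrtm A


/-- The mean `A ♮ B := A^{1/2} (B^{1/2} A⁻¹ B^{1/2})^{1/2} A^{1/2}` of positive definite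
matrices. -/
noncomputable def naturalMean {n : ℕ} (A B : Matrix (Fin n) (Fin n) ℂ) :
    Matrix (Fin n) (Fin n) ℂ :=
  sqrtm A * sqrtm (sqrtm B * A⁻¹ * sqrtm B) * sqrtm A

/-! With `S = A^{1/2}` and `X = B^{1/2} S⁻¹` one has `A^{1/2} B^{1/2} = S X S`, `A ♯ B = S |X| S`
and `A ♮ B = S |Xᴴ| S`. Splitting `S X S = (S X |X|^{-1/2}) (|X|^{1/2} S)`, the two factors have
Gram matrices `A ♮ B` and `A ♯ B`, so submultiplicativity and the C⋆-identity `‖Y‖² = ‖Y Yᴴ‖`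
give the bound. -/

open Matrix
open scoped Matrix.Norms.L2Operator MatrixOrder

lemma CStarRing.sq_norm_mul_le {E : Type*} [NonUnitalNormedRing E] [StarRing E] [CStarRing E]
    (y z : E) : ‖y * z‖ ^ 2 ≤ ‖y * star y‖ * ‖star z * z‖ := by
  rw [CStarRing.norm_self_mul_star, CStarRing.norm_star_mul_self]
  calc ‖y * z‖ ^ 2 ≤ (‖y‖ * ‖z‖) ^ 2 := by gcongr; exact norm_mul_le y z
    _ = ‖y‖ * ‖y‖ * (‖z‖ * ‖z‖) := by ring

section

variable {n : ℕ}

lemma specNorm_eq_norm {m : ℕ} (X : Matrix (Fin m) (Fin n) ℂ) : specNorm X = ‖X‖ :=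
  (l2_opNorm_def X).symm

lemma sqrtm_eq_cfcSqrt {A : Matrix (Fin n) (Fin n) ℂ} (hA : A.PosSemidef) :
    sqrtm A = CFC.sqrt A := by
  rw [CFC.sqrt_eq_real_sqrt A hA.nonneg, cfcₙ_eq_cfc, hA.1.cfc_eq]
  simp [sqrtm, hA, IsHermitian.cfc, Function.comp_def]

lemma Matrix.PosSemidef.sqrtm {A : Matrix (Fin n) (Fin n) ℂ} (hA : A.PosSemidef) :
    (sqrtm A).PosSemidef := by
  rw [sqrtm_eq_cfcSqrt hA]
  exact (CFC.sqrt_nonneg A).posSemidef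

lemma Matrix.PosDef.sqrtm {A : Matrix (Fin n) (Fin n) ℂ} (hA : A.PosDef) : (sqrtm A).PosDef := by
  rw [sqrtm_eq_cfcSqrt hA.posSemidef]
  exact (IsStrictlyPositive.sqrt A hA.isStrictlyPositive).posDef

lemma sqrtm_mul_sqrtm {A : Matrix (Fin n) (Fin n) ℂ} (hA : A.PosSemidef) :
    sqrtm A * sqrtm A = A := by
  rw [sqrtm_eq_cfcSqrt hA]
  exact CFC.sqrt_mul_sqrt_self A hA.nonneg

lemma sqrtm_eq_of_mul_self {A C : Matrix (Fin n) (Fin n) ℂ} (hA : A.PosSemidef)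
    (hC : C.PosSemidef) (h : C * C = A) : sqrtm A = C := by
  rw [sqrtm_eq_cfcSqrt hA]
  exact CFC.sqrt_unique h hC.nonneg

lemma posDef_absm_of_isUnit {X : Matrix (Fin n) (Fin n) ℂ} (hX : IsUnit X) : (absm X).PosDef :=
  PosDef.sqrtm <| (posSemidef_conjTranspose_mul_self X).posDef_iff_isUnit.mpr (hX.star.mul hX)

/-- Polar decomposition: `X = U |X|` with `U` unitary, so `|Xᴴ| = U |X| Uᴴ = X |X|⁻¹ Xᴴ`. -/
lemma absm_conjTranspose {X : Matrix (Fin n) (Fin n) ℂ} (hX : IsUnit X) :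
    absm Xᴴ = X * (absm X)⁻¹ * Xᴴ := by
  set P := absm X
  have hP : P.PosDef := posDef_absm_of_isUnit hX
  have hPP : P * P = Xᴴ * X := sqrtm_mul_sqrtm (posSemidef_conjTranspose_mul_self X)
  have hPdet : IsUnit P.det := hP.isUnit.map detMonoidHom
  rw [absm, conjTranspose_conjTranspose]
  refine sqrtm_eq_of_mul_self (posSemidef_self_mul_conjTranspose X)
    (hP.inv.posSemidef.mul_mul_conjTranspose_same X) ?_
  calc X * P⁻¹ * Xᴴ * (X * P⁻¹ * Xᴴ) = X * (P⁻¹ * (Xᴴ * X * (P⁻¹ * Xᴴ))) := by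
        simp only [mul_assoc]
    _ = X * Xᴴ := by
        rw [← hPP, mul_assoc, nonsing_inv_mul_cancel_left _ _ hPdet,
          mul_nonsing_inv_cancel_left _ _ hPdet]

lemma specNorm_mul_mul_sq_le {X : Matrix (Fin n) (Fin n) ℂ} (hX : IsUnit X)
    (W V : Matrix (Fin n) (Fin n) ℂ) :
    specNorm (W * X * V) ^ 2 ≤ specNorm (W * absm Xᴴ * Wᴴ) * specNorm (Vᴴ * absm X * V) := by
  set R := sqrtm (absm X)
  have hR : R.PosDef := (posDef_absm_of_isUnit hX).sqrtm
  have hRR : R * R = absm X := sqrtm_mul_sqrtm (posDef_absm_of_isUnit hX).posSemidef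
  have hRdet : IsUnit R.det := hR.isUnit.map detMonoidHom
  have hfactor : W * X * V = W * X * R⁻¹ * (R * V) := by
    simp only [mul_assoc, nonsing_inv_mul_cancel_left _ _ hRdet]
  have hleft : W * X * R⁻¹ * (W * X * R⁻¹)ᴴ = W * absm Xᴴ * Wᴴ := by
    rw [absm_conjTranspose hX, ← hRR, Matrix.mul_inv_rev]
    simp only [conjTranspose_mul, hR.isHermitian.inv.eq, mul_assoc]
  have hright : (R * V)ᴴ * (R * V) = Vᴴ * absm X * V := by
    rw [← hRR, conjTranspose_mul, hR.isHermitian.eq]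
    simp only [mul_assoc]
  simp only [specNorm_eq_norm]
  rw [hfactor, ← hleft, ← hright]
  exact CStarRing.sq_norm_mul_le _ _

lemma geomMean_eq_absm {A B : Matrix (Fin n) (Fin n) ℂ} (hA : A.PosSemidef) (hB : B.PosSemidef) :
    geomMean A B = sqrtm A * absm (sqrtm B * (sqrtm A)⁻¹) * sqrtm A := by
  have hgram : (sqrtm B * (sqrtm A)⁻¹)ᴴ * (sqrtm B * (sqrtm A)⁻¹) =
      (sqrtm A)⁻¹ * B * (sqrtm A)⁻¹ := by
    rw [conjTranspose_mul, hA.sqrtm.isHermitian.inv.eq, hB.sqrtm.isHermitian.eq, mul_assoc,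
      ← mul_assoc (sqrtm B), sqrtm_mul_sqrtm hB, ← mul_assoc]
  rw [geomMean, absm, hgram]

lemma naturalMean_eq_absm {A B : Matrix (Fin n) (Fin n) ℂ} (hA : A.PosSemidef)
    (hB : B.PosSemidef) :
    naturalMean A B = sqrtm A * absm (sqrtm B * (sqrtm A)⁻¹)ᴴ * sqrtm A := by
  have hAinv : A⁻¹ = (sqrtm A)⁻¹ * (sqrtm A)⁻¹ := by rw [← Matrix.mul_inv_rev, sqrtm_mul_sqrtm hA]
  rw [naturalMean, absm, conjTranspose_conjTranspose, conjTranspose_mul,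
    hA.sqrtm.isHermitian.inv.eq, hB.sqrtm.isHermitian.eq, hAinv]
  simp only [mul_assoc]

end

/-- For positive definite `A, B`, `‖A^{1/2} B^{1/2}‖² ≤ ‖A ♯ B‖ ⬝ ‖A ♮ B‖`
for the spectral norm. -/
theorem sq_specNorm_le_specNorm_geomMean_mul_naturalMean {n : ℕ}
    (A B : Matrix (Fin n) (Fin n) ℂ) (hA : A.PosDef) (hB : B.PosDef) :
    specNorm (sqrtm A * sqrtm B) ^ 2 ≤ specNorm (geomMean A B) * specNorm (naturalMean A B) := by
  set S := sqrtm A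
  have hS : S.PosDef := hA.sqrtm
  have hX : IsUnit (sqrtm B * S⁻¹) := hB.sqrtm.isUnit.mul hS.inv.isUnit
  have hST : S * sqrtm B = S * (sqrtm B * S⁻¹) * S := by
    rw [mul_assoc S, nonsing_inv_mul_cancel_right _ _ (hS.isUnit.map detMonoidHom)]
  rw [geomMean_eq_absm hA.posSemidef hB.posSemidef, naturalMean_eq_absm hA.posSemidef
    hB.posSemidef, hST, mul_comm]
  simpa only [hS.isHermitian.eq] using specNorm_mul_mul_sq_le hX S S
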